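/- arXiv:1508.01543 — 3 statements merged into one kernel-verified Lean document; each statement's English description precedes it below -/
import Mathlib

section
/- Let {X_i}_{i ∈ I} be a nonempty family of pairwise comaximal ideals of a ring R, let M be a right R-module, and let Y be a generating set of M. If for each y ∈ Y there exists a nonempty finite subset J ⊆ I with ⋂_{j∈J} X_j ⊆ r_R(y) (the right annihilator of y in R), then M = ⊕_{i∈I} ℓ_M(X_i), where ℓ_M(X) = {m ∈ M : mX = 0}. Conversely, if M = ⊕_{i∈I} ℓ_M(X_i), then every y ∈ Y has such a finite subset J with ⋂_{j∈J} X_j ⊆ r_R(y). -/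
open MulOpposite

/-- For a right `R`-module `M` (a module over `Rᵐᵒᵖ`) and an ideal `X` of `R`,
the left annihilator `ℓ_M(X) = {m ∈ M | m X = 0}`, a submodule of `M`. -/
def ell (R : Type*) [Ring R] (M : Type*) [AddCommGroup M] [Module Rᵐᵒᵖ M]
    (X : Ideal R) : Submodule Rᵐᵒᵖ M where
  carrier := {m | ∀ x ∈ X, op x • m = 0}
  add_mem' := by intro a b ha hb x hx; simp [smul_add, ha x hx, hb x hx]
  zero_mem' := by intro x hx; simp
  smul_mem' := by
    intro c m hm x hx
    have h2 : op x • c • m = op (c.unop * x) • m := by rw [← mul_smul]; rfl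
    rw [h2]; exact hm _ (X.mul_mem_left c.unop hx)

section Aux
variable {R : Type*} [Ring R] {M : Type*} [AddCommGroup M] [Module Rᵐᵒᵖ M]

lemma ell_anti {X Y : Ideal R} (h : X ≤ Y) : ell R M Y ≤ ell R M X :=
  fun m hm x hx => hm x (h hx)

lemma comax_inf {ι : Type*} (X : ι → Ideal R)
    (htwo : ∀ i, ∀ x ∈ X i, ∀ r : R, x * r ∈ X i)
    (i : ι) (J : Finset ι) (h : ∀ j ∈ J, X i ⊔ X j = ⊤) :
    X i ⊔ (⨅ j ∈ J, X j) = ⊤ := by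
  classical
  induction J using Finset.induction with
  | empty => simp
  | @insert a s ha ih =>
    have h1 : X i ⊔ X a = ⊤ := h a (Finset.mem_insert_self _ _)
    have h2 : X i ⊔ (⨅ j ∈ s, X j) = ⊤ := ih fun j hj => h j (Finset.mem_insert_of_mem hj)
    rw [Finset.iInf_insert]
    rw [Ideal.eq_top_iff_one, Submodule.mem_sup] at h1 h2 ⊢
    obtain ⟨a1, ha1, x1, hx1, e1⟩ := h1
    obtain ⟨a2, ha2, x2, hx2, e2⟩ := h2
    refine ⟨a1 + a2 - a1 * a2, sub_mem (add_mem ha1 ha2) (htwo i a1 ha1 a2),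
      x1 * x2, Submodule.mem_inf.mpr ⟨htwo a x1 hx1 x2, Ideal.mul_mem_left _ x1 hx2⟩, ?_⟩
    have e1' : x1 = 1 - a1 := eq_sub_of_add_eq' e1
    have e2' : x2 = 1 - a2 := eq_sub_of_add_eq' e2
    subst e1' e2'
    noncomm_ring

lemma mem_biSup_of_ann {ι : Type*} (X : ι → Ideal R)
    (htwo : ∀ i, ∀ x ∈ X i, ∀ r : R, x * r ∈ X i)
    (hcom : ∀ i j, i ≠ j → X i ⊔ X j = ⊤)
    (J : Finset ι) :
    ∀ y : M, (∀ r ∈ (⨅ j ∈ J, X j), op r • y = 0) → y ∈ ⨆ j ∈ J, ell R M (X j) := by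
  classical
  induction J using Finset.induction with
  | empty =>
    intro y hy
    have h1 := hy 1 (by simp)
    rw [op_one, one_smul] at h1
    simp [h1]
  | @insert a s ha ih =>
    intro y hy
    have hc : X a ⊔ (⨅ j ∈ s, X j) = ⊤ :=
      comax_inf X htwo a s (fun j hj => hcom a j (fun h => ha (h ▸ hj)))
    rw [Ideal.eq_top_iff_one, Submodule.mem_sup] at hc
    obtain ⟨c, hc1, b, hb, e⟩ := hc
    have hmem : ∀ r : R, r ∈ X a → (∀ j ∈ s, r ∈ X j) → op r • y = 0 := by
      intro r hra hrs
      apply hy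
      simp only [Ideal.mem_iInf, Finset.mem_insert]
      rintro j
      rintro (rfl | hj)
      · exact hra
      · exact hrs j hj
    have hbs : ∀ j ∈ s, b ∈ X j := by
      intro j hj
      simp only [Ideal.mem_iInf] at hb
      exact hb j hj
    have h1 : op c • y ∈ ⨆ j ∈ s, ell R M (X j) := by
      apply ih
      intro r hr
      rw [← mul_smul, ← op_mul]
      refine hmem _ (htwo a c hc1 r) (fun j hj => Ideal.mul_mem_left _ c ?_)
      simp only [Ideal.mem_iInf] at hr
      exact hr j hj
    have h2 : op b • y ∈ ell R M (X a) := by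
      intro x hx
      rw [← mul_smul, ← op_mul]
      exact hmem _ (Ideal.mul_mem_left _ b hx) (fun j hj => htwo j b (hbs j hj) x)
    have hsum : y = op b • y + op c • y := by
      rw [← add_smul, ← op_add]
      rw [add_comm] at e
      rw [e, op_one, one_smul]
    rw [hsum, Finset.iSup_insert]
    exact Submodule.add_mem_sup h2 h1

end Aux

/-- Theorem (decomposition, level-one version). Let `{X i}_{i ∈ ι}` be a nonempty family of
pairwise comaximal two-sided ideals of `R`, `M` a right `R`-module (module over `Rᵐᵒᵖ`) and
`Y` a generating set of `M`.  Then each `y ∈ Y` has a nonempty finite `J ⊆ ι` with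
`⋂_{j ∈ J} X j ⊆ r_R(y)` iff `M = ⊕_{i} ℓ_M(X i)`. -/
theorem stmt6 (R : Type*) [Ring R] (M : Type*) [AddCommGroup M] [Module Rᵐᵒᵖ M]
    {ι : Type*} [Nonempty ι] (X : ι → Ideal R)
    (htwo : ∀ i, ∀ x ∈ X i, ∀ r : R, x * r ∈ X i)
    (hcom : ∀ i j, i ≠ j → X i ⊔ X j = ⊤)
    (Y : Set M) (hY : Submodule.span Rᵐᵒᵖ Y = ⊤) :
    (∀ y ∈ Y, ∃ J : Finset ι, J.Nonempty ∧
        ∀ r ∈ (⨅ j ∈ J, X j), op r • y = 0) ↔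
      (iSupIndep (fun i => ell R M (X i)) ∧ (⨆ i, ell R M (X i)) = ⊤) := by
  classical
  constructor
  · intro h
    constructor
    · -- independence
      intro i
      rw [Submodule.disjoint_def]
      intro m hmi hm
      rw [Submodule.mem_iSup_iff_exists_finset] at hm
      obtain ⟨s, hs⟩ := hm
      have hle : (⨆ j ∈ s, ⨆ _ : j ≠ i, ell R M (X j)) ≤
          ell R M (⨅ j ∈ s.erase i, X j) := by
        refine iSup₂_le fun j hj => iSup_le fun hji => ?_
        exact ell_anti (iInf₂_le j (Finset.mem_erase.mpr ⟨hji, hj⟩))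
      have hm' : m ∈ ell R M (⨅ j ∈ s.erase i, X j) := hle hs
      have hc : X i ⊔ (⨅ j ∈ s.erase i, X j) = ⊤ :=
        comax_inf X htwo i _ (fun j hj => hcom i j (Ne.symm (Finset.mem_erase.mp hj).1))
      rw [Ideal.eq_top_iff_one, Submodule.mem_sup] at hc
      obtain ⟨a, haX, b, hb, e⟩ := hc
      calc m = op (a + b) • m := by rw [e, op_one, one_smul]
        _ = op a • m + op b • m := by rw [op_add, add_smul]
        _ = 0 := by rw [hmi a haX, hm' b hb, add_zero]
    · -- sup = ⊤
      rw [← top_le_iff, ← hY, Submodule.span_le]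
      intro y hy
      obtain ⟨J, -, hann⟩ := h y hy
      have := mem_biSup_of_ann X htwo hcom J y hann
      exact (iSup₂_le fun j _ => le_iSup (fun i => ell R M (X i)) j) this
  · rintro ⟨-, htop⟩ y hy
    have hmem : y ∈ ⨆ i, ell R M (X i) := htop ▸ Submodule.mem_top
    rw [Submodule.mem_iSup_iff_exists_finset] at hmem
    obtain ⟨s, hs⟩ := hmem
    obtain ⟨i0⟩ := ‹Nonempty ι›
    refine ⟨insert i0 s, ⟨i0, Finset.mem_insert_self _ _⟩, ?_⟩
    have hle : (⨆ j ∈ s, ell R M (X j)) ≤ ell R M (⨅ j ∈ insert i0 s, X j) :=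
      iSup₂_le fun j hj => ell_anti (iInf₂_le j (Finset.mem_insert_of_mem hj))
    exact fun r hr => hle hs r hr
end

section
/- Let {X_i}_{i ∈ I} be a nonempty family of pairwise comaximal ideals of a ring R, M a right R-module with generating set Y, and for an ideal X define the component C(X) = ∑_{k∈ℕ} ℓ_M(X^k). Then M = ⊕_{i∈I} C(X_i) if and only if for every y ∈ Y there exist a nonempty finite subset J ⊆ I and positive integers k_j (j ∈ J) such that ⋂_{j∈J} X_j^{k_j} ⊆ r_R(y). -/
open MulOpposite

/-- The product of two (two-sided) ideals of a possibly noncommutative ring: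
the ideal generated by products `a * b` with `a ∈ A`, `b ∈ B`. -/
def imul {R : Type*} [Ring R] (A B : Ideal R) : Ideal R :=
  Ideal.span {x | ∃ a ∈ A, ∃ b ∈ B, x = a * b}

/-- The `k`-th power of an ideal (with `X ^ 0 = R`). -/
def ipow {R : Type*} [Ring R] (A : Ideal R) : ℕ → Ideal R
  | 0 => ⊤
  | k + 1 => imul (ipow A k) A

/-- The component of an ideal `X` in `M`: `C(X) = ∑_{k ≥ 1} ℓ_M(X^k)`. -/
def comp (R : Type*) [Ring R] (M : Type*) [AddCommGroup M] [Module Rᵐᵒᵖ M]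
    (X : Ideal R) : Submodule Rᵐᵒᵖ M :=
  ⨆ k : ℕ, ell R M (ipow X (k + 1))

section Aux

variable {R : Type*} [Ring R]

/-- `A` is closed under right multiplication (i.e. is a two-sided ideal). -/
def RightClosed (A : Ideal R) : Prop := ∀ x ∈ A, ∀ r : R, x * r ∈ A

lemma mem_imul {A B : Ideal R} {a b : R} (ha : a ∈ A) (hb : b ∈ B) : a * b ∈ imul A B :=
  Ideal.subset_span ⟨a, ha, b, hb, rfl⟩

lemma imul_rightClosed (A : Ideal R) {B : Ideal R} (hB : RightClosed B) :
    RightClosed (imul A B) := by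
  intro x hx r
  induction hx using Submodule.span_induction with
  | mem x hx =>
    obtain ⟨a, ha, b, hb, rfl⟩ := hx
    rw [mul_assoc]; exact mem_imul ha (hB b hb r)
  | zero => simp
  | add x y _ _ hx hy => simpa [add_mul] using (imul A B).add_mem hx hy
  | smul c x _ hx =>
    simpa [smul_eq_mul, mul_assoc] using (imul A B).mul_mem_left c hx

lemma ipow_rightClosed {X : Ideal R} (hX : RightClosed X) (n : ℕ) :
    RightClosed (ipow X n) := by
  cases n with
  | zero => intro x _ r; trivial
  | succ n => exact imul_rightClosed _ hX

lemma pow_mem_ipow {X : Ideal R} {b : R} (hb : b ∈ X) (n : ℕ) : b ^ n ∈ ipow X n := by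
  induction n with
  | zero => trivial
  | succ n ih => rw [pow_succ]; exact mem_imul ih hb

/-- Comaximality of two ideals, in element form. -/
def Comax (A B : Ideal R) : Prop := ∃ a ∈ A, ∃ b ∈ B, a + b = 1

lemma comax_symm {A B : Ideal R} (h : Comax A B) : Comax B A := by
  obtain ⟨a, ha, b, hb, hab⟩ := h
  exact ⟨b, hb, a, ha, by rw [add_comm]; exact hab⟩

lemma comax_top (A : Ideal R) : Comax A ⊤ := ⟨0, A.zero_mem, 1, trivial, zero_add 1⟩

lemma comax_ipow {A B : Ideal R} (hA : RightClosed A) (h : Comax A B) (n : ℕ) :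
    Comax A (ipow B n) := by
  obtain ⟨a, ha, b, hb, hab⟩ := h
  have key : ∀ m : ℕ, ∃ c ∈ A, c + b ^ m = 1 := by
    intro m
    induction m with
    | zero => exact ⟨0, A.zero_mem, by simp⟩
    | succ m ih =>
      obtain ⟨c, hc, hcb⟩ := ih
      refine ⟨c * a + c * b + b ^ m * a, ?_, ?_⟩
      · exact A.add_mem (A.add_mem (hA c hc a) (hA c hc b)) (A.mul_mem_left _ ha)
      · have h1 : (c + b ^ m) * (a + b) = 1 := by rw [hcb, hab]; rw [one_mul]
        calc c * a + c * b + b ^ m * a + b ^ (m + 1)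
            = (c + b ^ m) * (a + b) := by rw [pow_succ]; noncomm_ring
          _ = 1 := h1
  obtain ⟨c, hc, hcb⟩ := key n
  exact ⟨c, hc, b ^ n, pow_mem_ipow hb n, hcb⟩

lemma comax_inf_s7 {A B C : Ideal R} (hA : RightClosed A) (hB : RightClosed B)
    (h1 : Comax A B) (h2 : Comax A C) : Comax A (B ⊓ C) := by
  obtain ⟨a, ha, b, hb, hab⟩ := h1
  obtain ⟨a', ha', c, hc, hac⟩ := h2
  refine ⟨a * a' + a * c + b * a', ?_, b * c, ⟨hB b hb c, C.mul_mem_left b hc⟩, ?_⟩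
  · exact A.add_mem (A.add_mem (A.mul_mem_left a ha') (hA a ha c)) (A.mul_mem_left b ha')
  · have h1 : (a + b) * (a' + c) = 1 := by rw [hab, hac]; rw [one_mul]
    calc a * a' + a * c + b * a' + b * c = (a + b) * (a' + c) := by noncomm_ring
      _ = 1 := h1

lemma comax_finset_inf {ι : Type*} {A : Ideal R} (hA : RightClosed A) (J : Finset ι)
    (B : ι → Ideal R) (hB : ∀ j ∈ J, RightClosed (B j)) (h : ∀ j ∈ J, Comax A (B j)) :
    Comax A (⨅ j ∈ J, B j) := by
  classical
  induction J using Finset.induction_on with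
  | empty => simpa using comax_top A
  | @insert j s hj ih =>
    rw [Finset.iInf_insert]
    exact comax_inf_s7 hA (hB _ (Finset.mem_insert_self _ _))
      (h _ (Finset.mem_insert_self _ _))
      (ih (fun j hj => hB j (Finset.mem_insert_of_mem hj))
        (fun j hj => h j (Finset.mem_insert_of_mem hj)))

end Aux

section Mod

variable {R : Type*} [Ring R] {M : Type*} [AddCommGroup M] [Module Rᵐᵒᵖ M]

lemma ell_antitone {A B : Ideal R} (h : A ≤ B) : ell R M B ≤ ell R M A :=
  fun m hm x hx => hm x (h hx)

lemma ipow_succ_le {X : Ideal R} (hX : RightClosed X) (n : ℕ) :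
    ipow X (n + 1) ≤ ipow X n := by
  rw [show ipow X (n+1) = imul (ipow X n) X from rfl, imul, Ideal.span_le]
  rintro x ⟨a, ha, b, hb, rfl⟩
  exact ipow_rightClosed hX n a ha b

lemma mem_comp_iff {X : Ideal R} (hX : RightClosed X) (m : M) :
    m ∈ comp R M X ↔ ∃ k, m ∈ ell R M (ipow X (k + 1)) := by
  have hmono : Monotone fun k => ell R M (ipow X (k + 1)) := by
    intro a b hab
    induction hab with
    | refl => exact le_rfl
    | step h ih => exact le_trans ih (ell_antitone (ipow_succ_le hX _))
  exact Submodule.mem_iSup_of_chain ⟨fun k => ell R M (ipow X (k + 1)), hmono⟩ m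

lemma ell_le_comp {X : Ideal R} {k : ℕ} (hk : 1 ≤ k) :
    ell R M (ipow X k) ≤ comp R M X := by
  obtain ⟨m, rfl⟩ := Nat.exists_eq_add_of_le hk
  clear hk
  rw [add_comm]
  exact le_iSup (fun k => ell R M (ipow X (k + 1))) m

lemma smul_op_smul (b x : R) (y : M) : op x • op b • y = op (b * x) • y := by
  rw [← mul_smul, ← op_mul]

end Mod

section Key

variable {R : Type*} [Ring R] {M : Type*} [AddCommGroup M] [Module Rᵐᵒᵖ M]
variable {ι : Type*} (X : ι → Ideal R)

/-- Key induction: if a finite intersection of powers of pairwise comaximal two-sided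
ideals annihilates `y`, then `y` lies in the sum of the components. -/
lemma key_mem_iSup (htwo : ∀ i, RightClosed (X i))
    (hcom : ∀ i j, i ≠ j → Comax (X i) (X j))
    (J : Finset ι) (k : ι → ℕ) (hk : ∀ j ∈ J, 1 ≤ k j) (y : M)
    (hy : ∀ r ∈ ⨅ j ∈ J, ipow (X j) (k j), op r • y = 0) :
    y ∈ ⨆ i, comp R M (X i) := by
  classical
  induction J using Finset.induction_on generalizing y with
  | empty =>
    have := hy 1 (by simp)
    rw [show (1 : R) = ((1 : Rᵐᵒᵖ).unop) from rfl] at this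
    simp only [op_unop, one_smul] at this
    rw [this]; exact Submodule.zero_mem _
  | @insert j₀ s hj₀ ih =>
    have hAcl : RightClosed (ipow (X j₀) (k j₀)) := ipow_rightClosed (htwo j₀) _
    have hcmax : Comax (ipow (X j₀) (k j₀)) (⨅ j ∈ s, ipow (X j) (k j)) := by
      refine comax_finset_inf hAcl s _ (fun j _ => ipow_rightClosed (htwo j) _) ?_
      intro j hjs
      have hne : j₀ ≠ j := fun h => hj₀ (h ▸ hjs)
      have h1 : Comax (X j₀) (ipow (X j) (k j)) :=
        comax_ipow (htwo j₀) (hcom _ _ hne) _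
      exact comax_symm (comax_ipow (ipow_rightClosed (htwo j) _) (comax_symm h1) _)
    obtain ⟨a, ha, b, hb, hab⟩ := hcmax
    simp only [Submodule.mem_iInf] at hb
    have hysplit : y = op a • y + op b • y := by
      rw [← add_smul, ← op_add, hab]
      rw [show (1 : R) = ((1 : Rᵐᵒᵖ).unop) from rfl]
      simp only [op_unop, one_smul]
    have hbmem : op b • y ∈ ell R M (ipow (X j₀) (k j₀)) := by
      intro x hx
      rw [smul_op_smul]
      apply hy
      simp only [Submodule.mem_iInf]
      intro j hj
      rcases Finset.mem_insert.mp hj with rfl | hjs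
      · exact (ipow (X j) (k j)).mul_mem_left b hx
      · exact ipow_rightClosed (htwo j) _ b (hb j hjs) x
    have hamem : op a • y ∈ ⨆ i, comp R M (X i) := by
      refine ih (fun j hj => hk j (Finset.mem_insert_of_mem hj)) (op a • y) ?_
      intro r hr
      simp only [Submodule.mem_iInf] at hr
      rw [smul_op_smul]
      apply hy
      simp only [Submodule.mem_iInf]
      intro j hj
      rcases Finset.mem_insert.mp hj with rfl | hjs
      · exact hAcl a ha r
      · exact (ipow (X j) (k j)).mul_mem_left a (hr j hjs)
    rw [hysplit]
    refine Submodule.add_mem _ hamem ?_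
    exact Submodule.mem_iSup_of_mem j₀
      (ell_le_comp (hk j₀ (Finset.mem_insert_self _ _)) hbmem)

end Key

/-- Main decomposition theorem. -/
theorem stmt7 (R : Type*) [Ring R] (M : Type*) [AddCommGroup M] [Module Rᵐᵒᵖ M]
    {ι : Type*} [Nonempty ι] (X : ι → Ideal R)
    (htwo : ∀ i, ∀ x ∈ X i, ∀ r : R, x * r ∈ X i)
    (hcom : ∀ i j, i ≠ j → X i ⊔ X j = ⊤)
    (Y : Set M) (hY : Submodule.span Rᵐᵒᵖ Y = ⊤) :
    (iSupIndep (fun i => comp R M (X i)) ∧ (⨆ i, comp R M (X i)) = ⊤) ↔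
      (∀ y ∈ Y, ∃ J : Finset ι, J.Nonempty ∧ ∃ k : ι → ℕ, (∀ j ∈ J, 1 ≤ k j) ∧
        ∀ r ∈ (⨅ j ∈ J, ipow (X j) (k j)), op r • y = 0) := by
  classical
  have htwo' : ∀ i, RightClosed (X i) := htwo
  have hcom' : ∀ i j, i ≠ j → Comax (X i) (X j) := by
    intro i j hij
    have : (1 : R) ∈ X i ⊔ X j := by rw [hcom i j hij]; trivial
    obtain ⟨a, ha, b, hb, hab⟩ := Submodule.mem_sup.mp this
    exact ⟨a, ha, b, hb, hab⟩
  constructor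
  · rintro ⟨_, htop⟩ y _
    have hy : y ∈ ⨆ i, comp R M (X i) := htop ▸ Submodule.mem_top
    obtain ⟨f, hf, hsum⟩ := (Submodule.mem_iSup_iff_exists_finsupp _ _).mp hy
    have hch : ∀ i, ∃ n, f i ∈ ell R M (ipow (X i) (n + 1)) := fun i =>
      (mem_comp_iff (htwo' i) (f i)).mp (hf i)
    choose n hn using hch
    refine ⟨insert (Classical.arbitrary ι) f.support, ⟨_, Finset.mem_insert_self _ _⟩,
      fun j => n j + 1, fun j _ => Nat.le_add_left 1 (n j), ?_⟩
    intro r hr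
    simp only [Submodule.mem_iInf] at hr
    rw [← hsum, Finsupp.sum, Finset.smul_sum]
    refine Finset.sum_eq_zero fun j hj => ?_
    exact hn j r (hr j (Finset.mem_insert_of_mem hj))
  · intro h
    constructor
    · intro i
      rw [Submodule.disjoint_def]
      intro m hm1 hm2
      obtain ⟨K, hK⟩ := (mem_comp_iff (htwo' i) m).mp hm1
      obtain ⟨f, hf, hsum⟩ := (Submodule.mem_iSup_iff_exists_finsupp _ _).mp hm2
      have hch : ∀ j, ∃ n, f j ∈ ell R M (ipow (X j) (n + 1)) := by
        intro j
        by_cases hji : j = i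
        · have hb0 : f j ∈ (⊥ : Submodule Rᵐᵒᵖ M) := by
            have hfj := hf j
            rwa [iSup_neg (by simp [hji])] at hfj
          exact ⟨0, by rw [(Submodule.mem_bot _).mp hb0]; exact Submodule.zero_mem _⟩
        · have : f j ∈ comp R M (X j) := by
            have := hf j
            rwa [iSup_pos hji] at this
          exact (mem_comp_iff (htwo' j) (f j)).mp this
      choose n hn using hch
      have hcmax : Comax (ipow (X i) (K + 1)) (⨅ j ∈ f.support, ipow (X j) (n j + 1)) := by
        refine comax_finset_inf (ipow_rightClosed (htwo' i) _) _ _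
          (fun j _ => ipow_rightClosed (htwo' j) _) ?_
        intro j hjs
        have hne : i ≠ j := by
          intro hij
          have hb0 : f j ∈ (⊥ : Submodule Rᵐᵒᵖ M) := by
            have hfj := hf j
            rwa [iSup_neg (by simp [hij.symm])] at hfj
          exact Finsupp.mem_support_iff.mp hjs ((Submodule.mem_bot _).mp hb0)
        have h1 : Comax (X i) (ipow (X j) (n j + 1)) :=
          comax_ipow (htwo' i) (hcom' _ _ hne) _
        exact comax_symm (comax_ipow (ipow_rightClosed (htwo' j) _) (comax_symm h1) _)
      obtain ⟨a, ha, b, hb, hab⟩ := hcmax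
      simp only [Submodule.mem_iInf] at hb
      have : m = op a • m + op b • m := by
        rw [← add_smul, ← op_add, hab]
        rw [show (1 : R) = ((1 : Rᵐᵒᵖ).unop) from rfl]
        simp only [op_unop, one_smul]
      rw [this, hK a ha, zero_add, ← hsum, Finsupp.sum, Finset.smul_sum]
      refine Finset.sum_eq_zero fun j hj => ?_
      exact hn j b (hb j hj)
    · rw [← top_le_iff, ← hY, Submodule.span_le]
      intro y hy
      obtain ⟨J, _, k, hk, hann⟩ := h y hy
      exact key_mem_iSup X htwo' hcom' J k hk y hann
end

section
/- In a ring R, the following are equivalent: (a) every prime ideal of R contains a unique minimal prime ideal; (b) every pair of distinct minimal prime ideals of R is comaximal (P_1 + P_2 = R). -/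
/-- A (two-sided) prime ideal of a possibly noncommutative ring: a proper two-sided ideal
`P` such that whenever `A B ⊆ P` for two-sided ideals `A`, `B`, then `A ⊆ P` or `B ⊆ P`. -/
def IsPrimeTS {R : Type*} [Ring R] (P : Ideal R) : Prop :=
  (∀ x ∈ P, ∀ r : R, x * r ∈ P) ∧ P ≠ ⊤ ∧
    ∀ A B : Ideal R, (∀ x ∈ A, ∀ r : R, x * r ∈ A) → (∀ x ∈ B, ∀ r : R, x * r ∈ B) →
      (∀ a ∈ A, ∀ b ∈ B, a * b ∈ P) → A ≤ P ∨ B ≤ P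

/-- A minimal prime ideal: a prime ideal minimal among prime ideals under inclusion. -/
def IsMinPrime {R : Type*} [Ring R] (P : Ideal R) : Prop :=
  IsPrimeTS P ∧ ∀ Q : Ideal R, IsPrimeTS Q → Q ≤ P → Q = P

section Aux

variable {R : Type*} [Ring R]

/-- Right-closedness (two-sidedness for mathlib left ideals). -/
def RCl (I : Ideal R) : Prop := ∀ x ∈ I, ∀ r : R, x * r ∈ I

/-- The ideal `{x | ∀ r, x * r * b ∈ P}`. -/
def auxC (b : R) (P : Ideal R) : Ideal R where
  carrier := {x | ∀ r : R, x * r * b ∈ P}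
  add_mem' := by
    intro x y hx hy r
    have h : (x + y) * r * b = x * r * b + y * r * b := by noncomm_ring
    rw [h]; exact P.add_mem (hx r) (hy r)
  zero_mem' := by intro r; simp
  smul_mem' := by
    intro c x hx r
    have h : c • x * r * b = c * (x * r * b) := by simp only [smul_eq_mul]; noncomm_ring
    rw [h]; exact P.mul_mem_left c (hx r)

lemma auxC_rcl (b : R) (P : Ideal R) : RCl (auxC b P) := by
  intro x hx r
  show ∀ t : R, x * r * t * b ∈ P
  intro t
  have h : x * r * t * b = x * (r * t) * b := by noncomm_ring
  rw [h]; exact hx (r * t)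

/-- The ideal `{y | x * y ∈ P ∧ ∀ s, x * s * y ∈ P}`. -/
def auxD (x : R) (P : Ideal R) : Ideal R where
  carrier := {y | x * y ∈ P ∧ ∀ s : R, x * s * y ∈ P}
  add_mem' := by
    rintro y z ⟨h1, h2⟩ ⟨h3, h4⟩
    constructor
    · rw [mul_add]; exact P.add_mem h1 h3
    · intro s; rw [mul_add]; exact P.add_mem (h2 s) (h4 s)
  zero_mem' := by simp
  smul_mem' := by
    rintro c y ⟨h1, h2⟩
    constructor
    · have h : x * (c • y) = x * c * y := by simp only [smul_eq_mul]; noncomm_ring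
      rw [h]; exact h2 c
    · intro s
      have h : x * s * (c • y) = x * (s * c) * y := by simp only [smul_eq_mul]; noncomm_ring
      rw [h]; exact h2 (s * c)

lemma auxD_rcl (x : R) (P : Ideal R) (hP : RCl P) : RCl (auxD x P) := by
  rintro y ⟨h1, h2⟩ r
  constructor
  · have h : x * (y * r) = (x * y) * r := by noncomm_ring
    rw [h]; exact hP _ h1 r
  · intro s
    have h : x * s * (y * r) = (x * s * y) * r := by noncomm_ring
    rw [h]; exact hP _ (h2 s) r

/-- Two-sided ideal generated by an element. -/
def tsSpan (a : R) : Ideal R := sInf {I : Ideal R | RCl I ∧ a ∈ I}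

lemma tsSpan_rcl (a : R) : RCl (tsSpan a) := by
  intro x hx r
  rw [tsSpan, Submodule.mem_sInf] at hx ⊢
  intro I hI
  exact hI.1 x (hx I hI) r

lemma mem_tsSpan (a : R) : a ∈ tsSpan a := by
  rw [tsSpan, Submodule.mem_sInf]; exact fun I hI => hI.2

lemma tsSpan_le {a : R} {I : Ideal R} (h1 : RCl I) (h2 : a ∈ I) : tsSpan a ≤ I :=
  sInf_le ⟨h1, h2⟩

/-- Element-wise characterization of primeness. -/
lemma isPrimeTS_iff (P : Ideal R) :
    IsPrimeTS P ↔ RCl P ∧ P ≠ ⊤ ∧ ∀ a b : R, (∀ r : R, a * r * b ∈ P) → a ∈ P ∨ b ∈ P := by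
  constructor
  · rintro ⟨hrc, hne, hpr⟩
    refine ⟨hrc, hne, fun a b hab => ?_⟩
    have key : ∀ x ∈ tsSpan a, ∀ y ∈ tsSpan b, x * y ∈ P := by
      intro x hx y hy
      have hxC : x ∈ auxC b P := tsSpan_le (auxC_rcl b P) (fun r => hab r) hx
      have hbD : b ∈ auxD x P := by
        refine ⟨?_, fun s => hxC s⟩
        have h1 := hxC 1
        rw [mul_one] at h1
        exact h1
      exact (tsSpan_le (auxD_rcl x P hrc) hbD hy).1
    rcases hpr (tsSpan a) (tsSpan b) (tsSpan_rcl a) (tsSpan_rcl b) key with h | h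
    · exact Or.inl (h (mem_tsSpan a))
    · exact Or.inr (h (mem_tsSpan b))
  · rintro ⟨hrc, hne, hel⟩
    refine ⟨hrc, hne, fun A B hA hB hAB => ?_⟩
    by_cases hAP : A ≤ P
    · exact Or.inl hAP
    · right
      obtain ⟨a, haA, haP⟩ := Set.not_subset.mp hAP
      intro b hb
      have h : ∀ r : R, a * r * b ∈ P := fun r => hAB _ (hA a haA r) _ hb
      rcases hel a b h with h' | h'
      · exact absurd h' haP
      · exact h'

/-- Every prime ideal contains a minimal prime ideal. -/
lemma exists_minPrime_le {P : Ideal R} (hP : IsPrimeTS P) :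
    ∃ Q : Ideal R, IsMinPrime Q ∧ Q ≤ P := by
  let s : Set (Ideal R)ᵒᵈ := {Q | IsPrimeTS (OrderDual.ofDual Q) ∧ OrderDual.ofDual Q ≤ P}
  have hchain : ∀ c ⊆ s, IsChain (· ≤ ·) c → ∀ y ∈ c, ∃ ub ∈ s, ∀ z ∈ c, z ≤ ub := by
    intro c hcs hc Q₀ hQ₀c
    set I : Ideal R := sInf (OrderDual.ofDual '' c) with hI
    have hmem : ∀ x : R, x ∈ I ↔ ∀ J ∈ c, x ∈ OrderDual.ofDual J := by
      intro x
      rw [hI, Submodule.mem_sInf]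
      constructor
      · intro h J hJ; exact h _ ⟨J, hJ, rfl⟩
      · rintro h _ ⟨J, hJ, rfl⟩; exact h J hJ
    have hIrc : RCl I := by
      intro x hx r
      rw [hmem] at hx ⊢
      intro J hJ
      exact ((hcs hJ).1).1 x (hx J hJ) r
    have hIne : I ≠ ⊤ := by
      intro h
      have h1 : (1 : R) ∈ I := h ▸ Submodule.mem_top
      have h2 := (hmem 1).mp h1 Q₀ hQ₀c
      exact ((hcs hQ₀c).1).2.1 (Ideal.eq_top_iff_one _ |>.mpr h2)
    have hIprime : IsPrimeTS I := by
      rw [isPrimeTS_iff]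
      refine ⟨hIrc, hIne, fun a b hab => ?_⟩
      by_cases ha : a ∈ I
      · exact Or.inl ha
      · right
        rw [hmem] at ha
        push_neg at ha
        obtain ⟨J₀, hJ₀c, haJ₀⟩ := ha
        rw [hmem]
        intro J hJ
        have hJp := (isPrimeTS_iff _).mp ((hcs hJ).1)
        have hJ₀p := (isPrimeTS_iff _).mp ((hcs hJ₀c).1)
        rcases hc.total hJ hJ₀c with hle | hle
        · -- in the dual, J ≤ J₀ means ofDual J₀ ≤ ofDual J as ideals
          have hle' : (OrderDual.ofDual J₀ : Ideal R) ≤ OrderDual.ofDual J := hle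
          rcases hJ₀p.2.2 a b (fun r => (hmem _).mp (hab r) J₀ hJ₀c) with h | h
          · exact absurd h haJ₀
          · exact hle' h
        · have hle' : (OrderDual.ofDual J : Ideal R) ≤ OrderDual.ofDual J₀ := hle
          rcases hJp.2.2 a b (fun r => (hmem _).mp (hab r) J hJ) with h | h
          · exact absurd (hle' h) haJ₀
          · exact h
    have hIle : I ≤ P := le_trans (sInf_le ⟨Q₀, hQ₀c, rfl⟩) (hcs hQ₀c).2
    refine ⟨OrderDual.toDual I, ⟨hIprime, hIle⟩, fun J hJ => ?_⟩
    show I ≤ OrderDual.ofDual J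
    exact sInf_le ⟨J, hJ, rfl⟩
  obtain ⟨M, hPM, hMs, hMmax⟩ := zorn_le_nonempty₀ s hchain (OrderDual.toDual P) ⟨hP, le_rfl⟩
  refine ⟨OrderDual.ofDual M, ⟨hMs.1, fun Q hQ hQM => ?_⟩, hMs.2⟩
  have h := hMmax (y := OrderDual.toDual Q) ⟨hQ, le_trans hQM hMs.2⟩ hQM
  exact le_antisymm hQM h

/-- Every proper two-sided ideal is contained in a maximal two-sided ideal, which is prime. -/
lemma exists_maximal_prime_le {I : Ideal R} (hrc : RCl I) (hne : I ≠ ⊤) :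
    ∃ M : Ideal R, IsPrimeTS M ∧ I ≤ M := by
  let s : Set (Ideal R) := {J | RCl J ∧ J ≠ ⊤ ∧ I ≤ J}
  have hchain : ∀ c ⊆ s, IsChain (· ≤ ·) c → ∀ y ∈ c, ∃ ub ∈ s, ∀ z ∈ c, z ≤ ub := by
    intro c hcs hc J₀ hJ₀c
    refine ⟨sSup c, ⟨?_, ?_, ?_⟩, fun J hJ => le_sSup hJ⟩
    · intro x hx r
      rw [Submodule.mem_sSup_of_directed ⟨J₀, hJ₀c⟩ hc.directedOn] at hx ⊢
      obtain ⟨J, hJ, hxJ⟩ := hx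
      exact ⟨J, hJ, (hcs hJ).1 x hxJ r⟩
    · intro h
      have h1 : (1 : R) ∈ sSup c := h ▸ Submodule.mem_top
      rw [Submodule.mem_sSup_of_directed ⟨J₀, hJ₀c⟩ hc.directedOn] at h1
      obtain ⟨J, hJ, h1J⟩ := h1
      exact (hcs hJ).2.1 (Ideal.eq_top_iff_one _ |>.mpr h1J)
    · exact le_trans (hcs hJ₀c).2.2 (le_sSup hJ₀c)
  obtain ⟨M, hIM, hMs, hMmax⟩ := zorn_le_nonempty₀ s hchain I ⟨hrc, hne, le_rfl⟩
  · obtain ⟨hMrc, hMne, _⟩ := hMs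
    refine ⟨M, ⟨hMrc, hMne, ?_⟩, hIM⟩
    intro A B hA hB hAB
    by_contra hcon
    push_neg at hcon
    obtain ⟨hAM, hBM⟩ := hcon
    have hsup : ∀ (C : Ideal R), RCl C → ¬ C ≤ M → M ⊔ C = ⊤ := by
      intro C hCrc hCM
      by_contra htop
      have hrcMC : RCl (M ⊔ C) := by
        intro x hx r
        rw [Submodule.mem_sup] at hx ⊢
        obtain ⟨m, hm, c, hc, rfl⟩ := hx
        exact ⟨m * r, hMrc m hm r, c * r, hCrc c hc r, (add_mul m c r).symm⟩
      have h := hMmax (y := M ⊔ C) ⟨hrcMC, htop, le_trans hIM le_sup_left⟩ le_sup_left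
      exact hCM (le_trans le_sup_right h)
    have hMA := hsup A hA hAM
    have hMB := hsup B hB hBM
    have h1A : (1 : R) ∈ M ⊔ A := hMA ▸ Submodule.mem_top
    have h1B : (1 : R) ∈ M ⊔ B := hMB ▸ Submodule.mem_top
    rw [Submodule.mem_sup] at h1A h1B
    obtain ⟨m, hm, a, ha, hma⟩ := h1A
    obtain ⟨m', hm', b, hb, hmb⟩ := h1B
    have h1 : (1 : R) = m * m' + m * b + a * m' + a * b := by
      calc (1 : R) = (m + a) * (m' + b) := by rw [hma, hmb, one_mul]
        _ = m * m' + m * b + a * m' + a * b := by noncomm_ring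
    have hmem1 : (1 : R) ∈ M := by
      rw [h1]
      exact M.add_mem (M.add_mem (M.add_mem (M.mul_mem_left m hm') (hMrc m hm b))
        (M.mul_mem_left a hm')) (hAB a ha b hb)
    exact hMne (Ideal.eq_top_iff_one _ |>.mpr hmem1)

end Aux

/-- In a ring `R`, every prime ideal contains a unique minimal prime ideal iff every pair
of distinct minimal prime ideals is comaximal. -/
theorem stmt13 (R : Type*) [Ring R] :
    (∀ P : Ideal R, IsPrimeTS P → ∃! Q : Ideal R, IsMinPrime Q ∧ Q ≤ P) ↔
      (∀ P₁ P₂ : Ideal R, IsMinPrime P₁ → IsMinPrime P₂ → P₁ ≠ P₂ → P₁ ⊔ P₂ = ⊤) := by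
  constructor
  · intro h P₁ P₂ h₁ h₂ hne
    by_contra htop
    have hrc : RCl (P₁ ⊔ P₂) := by
      intro x hx r
      rw [Submodule.mem_sup] at hx ⊢
      obtain ⟨m, hm, c, hc, rfl⟩ := hx
      exact ⟨m * r, h₁.1.1 m hm r, c * r, h₂.1.1 c hc r, (add_mul m c r).symm⟩
    obtain ⟨M, hMp, hMle⟩ := exists_maximal_prime_le hrc htop
    obtain ⟨Q, _, hQuniq⟩ := h M hMp
    have e1 : P₁ = Q := hQuniq P₁ ⟨h₁, le_trans le_sup_left hMle⟩
    have e2 : P₂ = Q := hQuniq P₂ ⟨h₂, le_trans le_sup_right hMle⟩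
    exact hne (e1.trans e2.symm)
  · intro h P hP
    obtain ⟨Q, hQmin, hQle⟩ := exists_minPrime_le hP
    refine ⟨Q, ⟨hQmin, hQle⟩, ?_⟩
    rintro Q' ⟨hQ'min, hQ'le⟩
    by_contra hne
    have htop := h Q' Q hQ'min hQmin hne
    have hle : (⊤ : Ideal R) ≤ P := htop ▸ sup_le hQ'le hQle
    exact hP.2.1 (top_le_iff.mp hle)
end
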